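/- arXiv:1106.1883 — 5 statements merged into one kernel-verified Lean document; each statement's English description precedes it below -/
import Mathlib

section
/- Let A be an additive abelian group, let I ⊆ A be a finite nonempty set, and let P ⊆ A. Suppose that P contains no set of the form q + {h(p) − p : p ∈ I} where q ∈ A and h : I → I is a function with h(p) ≠ p for all p ∈ I. Then for every q ∈ A ∖ P there exists x ∈ A with q ∈ x + I and (x + I) ∩ P = ∅; in particular, A ∖ P is a union of translates of I each disjoint from P. -/
theorem covering_lemma {A : Type*} [AddCommGroup A]
    (I : Finset A) (hI : I.Nonempty) (P : Set A)
    (hP : ∀ (q : A) (h : A → A), (∀ p ∈ I, h p ∈ I ∧ h p ≠ p) →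
      ¬ (∀ p ∈ I, q + (h p - p) ∈ P)) :
    ∀ q : A, q ∉ P → ∃ x : A, (∃ p ∈ I, q = x + p) ∧ ∀ p ∈ I, x + p ∉ P := by
  intro q hq
  classical
  by_contra hcon
  push_neg at hcon
  have key : ∀ p ∈ I, ∃ p' ∈ I, q - p + p' ∈ P := by
    intro p hp
    exact hcon (q - p) ⟨p, hp, by abel⟩
  choose f hf1 hf2 using key
  set h : A → A := fun p => if hp : p ∈ I then f p hp else p with hh
  refine hP q h (fun p hp => ?_) (fun p hp => ?_)
  · constructor
    · simp only [hh, dif_pos hp]; exact hf1 p hp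
    · simp only [hh, dif_pos hp]
      intro heq
      have := hf2 p hp
      rw [heq] at this
      simp only [sub_add_cancel] at this
      exact hq this
  · simp only [hh, dif_pos hp]
    have := hf2 p hp
    convert this using 1
    abel
end

section
/- Let V be a linear subspace of ℝ^n spanned by vectors with rational coordinates, let C ⊆ V be a convex cone whose interior relative to V is nonempty, and let V₁, …, V_k be proper linear subspaces of V. Then there exists a point z ∈ ℤ^n with z ∈ C and z ∉ Vᵢ for every i. -/
/-- A finite family of proper submodules of `V` cannot cover `V`. -/
lemma aux_avoid_subspaces {M : Type*} [AddCommGroup M] [Module ℝ M]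
    (V : Submodule ℝ M) {k : ℕ} (W : Fin k → Submodule ℝ M) (hW : ∀ i, W i < V) :
    ∃ v ∈ V, ∀ i, v ∉ W i := by
  by_contra h
  push_neg at h
  have hcov : ⋃ i, (((W i).comap V.subtype : Submodule ℝ V) : Set V) = Set.univ := by
    ext v
    simp only [Set.mem_iUnion, SetLike.mem_coe, Submodule.mem_comap, Submodule.coe_subtype,
      Set.mem_univ, iff_true]
    exact h v.1 v.2
  obtain ⟨i, hi⟩ := Subspace.exists_eq_top_of_iUnion_eq_univ hcov
  obtain ⟨w, hwV, hwW⟩ := SetLike.exists_of_lt (hW i)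
  exact hwW (by
    have : (⟨w, hwV⟩ : V) ∈ ((W i).comap V.subtype : Submodule ℝ V) := by
      rw [hi]; trivial
    exact this)

theorem lattice_point_in_cone_off_subspaces
    (n : ℕ) (V : Submodule ℝ (EuclideanSpace ℝ (Fin n)))
    (hVrat : ∃ S : Set (EuclideanSpace ℝ (Fin n)),
      (∀ v ∈ S, ∀ i, ∃ q : ℚ, v i = (q : ℝ)) ∧ V = Submodule.span ℝ S)
    (C : Set (EuclideanSpace ℝ (Fin n))) (hCV : C ⊆ (V : Set (EuclideanSpace ℝ (Fin n))))
    (hCadd : ∀ x ∈ C, ∀ y ∈ C, x + y ∈ C)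
    (hCsmul : ∀ (c : ℝ), 0 ≤ c → ∀ x ∈ C, c • x ∈ C)
    (hCint : ∃ x ∈ C, ∃ ε : ℝ, 0 < ε ∧
      ∀ y ∈ V, dist y x < ε → y ∈ C)
    (k : ℕ) (W : Fin k → Submodule ℝ (EuclideanSpace ℝ (Fin n)))
    (hW : ∀ i, W i < V) :
    ∃ z : EuclideanSpace ℝ (Fin n),
      (∀ i, ∃ a : ℤ, z i = (a : ℝ)) ∧ z ∈ C ∧ ∀ i, z ∉ W i := by
  obtain ⟨S, hSrat, hVspan⟩ := hVrat
  obtain ⟨x, hxC, ε, hε, hball⟩ := hCint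
  have hxV : x ∈ V := hCV hxC
  -- a direction in V avoiding all the W i
  obtain ⟨v, hvV, hv⟩ := aux_avoid_subspaces V W hW
  -- the set of "bad" parameters t is finite
  have hTfin : (⋃ i, {t : ℝ | x + t • v ∈ W i}).Finite := by
    apply Set.finite_iUnion
    intro i
    apply Set.Subsingleton.finite
    intro t₁ h₁ t₂ h₂
    by_contra hne
    apply hv i
    have hsub : (t₁ - t₂) • v ∈ W i := by
      have := (W i).sub_mem h₁ h₂
      simpa [sub_smul] using this
    have := (W i).smul_mem (t₁ - t₂)⁻¹ hsub
    rwa [smul_smul, inv_mul_cancel₀ (sub_ne_zero.mpr hne), one_smul] at this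
  -- pick a good small positive parameter t
  set r : ℝ := ε / (2 * (‖v‖ + 1)) with hr
  have hrpos : 0 < r := div_pos hε (by positivity)
  have : ((Set.Ioo (0:ℝ) r) \ ⋃ i, {t : ℝ | x + t • v ∈ W i}).Nonempty :=
    ((Set.Ioo_infinite hrpos).diff hTfin).nonempty
  obtain ⟨t, ⟨⟨ht0, htr⟩, htT⟩⟩ := this
  set p : EuclideanSpace ℝ (Fin n) := x + t • v with hp
  have hpV : p ∈ V := V.add_mem hxV (V.smul_mem t hvV)
  have hpW : ∀ i, p ∉ W i := by
    intro i hmem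
    exact htT (Set.mem_iUnion.mpr ⟨i, hmem⟩)
  have hpx : dist p x < ε / 2 := by
    have : dist p x = t * ‖v‖ := by
      rw [hp, dist_eq_norm, add_sub_cancel_left, norm_smul, Real.norm_eq_abs,
        abs_of_pos ht0]
    rw [this]
    calc t * ‖v‖ ≤ t * (‖v‖ + 1) := by nlinarith [norm_nonneg v]
      _ < r * (‖v‖ + 1) := by nlinarith [norm_nonneg v]
      _ = ε / 2 := by
          rw [hr]
          have hne : ‖v‖ + 1 ≠ 0 := by positivity
          field_simp
  -- an open neighborhood of p avoiding all W i
  have hGopen : IsOpen (⋂ i, ((W i : Set (EuclideanSpace ℝ (Fin n)))ᶜ)) := by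
    apply isOpen_iInter_of_finite
    intro i
    exact (Submodule.closed_of_finiteDimensional (W i)).isOpen_compl
  have hpG : p ∈ ⋂ i, ((W i : Set (EuclideanSpace ℝ (Fin n)))ᶜ) := by
    exact Set.mem_iInter.mpr fun i => hpW i
  obtain ⟨δ₁, hδ₁, hδ₁sub⟩ := Metric.isOpen_iff.mp hGopen p hpG
  set δ : ℝ := min δ₁ (ε - dist p x) with hδdef
  have hδpos : 0 < δ := by
    apply lt_min hδ₁
    linarith
  -- rational approximation of p within V
  have hpspan : p ∈ Submodule.span ℝ S := by rwa [← hVspan]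
  obtain ⟨m, f, g, hsum⟩ := Submodule.mem_span_set'.mp hpspan
  set B : ℝ := (∑ j, (‖(g j : EuclideanSpace ℝ (Fin n))‖ + 1)) + 1 with hB
  have hBpos : 0 < B := by
    have : (0:ℝ) ≤ ∑ j, (‖(g j : EuclideanSpace ℝ (Fin n))‖ + 1) :=
      Finset.sum_nonneg fun j _ => by positivity
    linarith
  have hq : ∀ j : Fin m, ∃ q : ℚ, |f j - (q:ℝ)| < δ / B := fun j =>
    exists_rat_near (f j) (div_pos hδpos hBpos)
  choose q hqf using hq
  set y : EuclideanSpace ℝ (Fin n) := ∑ j, (q j : ℝ) • (g j : EuclideanSpace ℝ (Fin n))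
    with hy
  have hyV : y ∈ V := by
    rw [hVspan]
    exact Submodule.sum_mem _ fun j _ =>
      Submodule.smul_mem _ _ (Submodule.subset_span (g j).2)
  have hyp : dist y p < δ := by
    rw [dist_eq_norm]
    have hdiff : y - p = ∑ j, ((q j : ℝ) - f j) • (g j : EuclideanSpace ℝ (Fin n)) := by
      rw [hy, ← hsum, ← Finset.sum_sub_distrib]
      congr 1; ext j; rw [sub_smul]
    rw [hdiff]
    calc ‖∑ j, ((q j : ℝ) - f j) • (g j : EuclideanSpace ℝ (Fin n))‖
        ≤ ∑ j, ‖((q j : ℝ) - f j) • (g j : EuclideanSpace ℝ (Fin n))‖ :=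
          norm_sum_le _ _
      _ ≤ ∑ j, (δ / B) * (‖(g j : EuclideanSpace ℝ (Fin n))‖ + 1) := by
          apply Finset.sum_le_sum
          intro j _
          rw [norm_smul, Real.norm_eq_abs, abs_sub_comm]
          have h1 := (hqf j).le
          have h2 : |f j - (q j : ℝ)| = |(q j : ℝ) - f j| := abs_sub_comm _ _
          have h3 : |(q j : ℝ) - f j| ≤ δ / B := by rw [← h2]; exact h1
          nlinarith [abs_nonneg ((q j : ℝ) - f j), norm_nonneg (g j : EuclideanSpace ℝ (Fin n)),
            div_pos hδpos hBpos]
      _ = (δ / B) * ∑ j, (‖(g j : EuclideanSpace ℝ (Fin n))‖ + 1) := by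
          rw [Finset.mul_sum]
      _ < δ := by
          have hlt : ∑ j, (‖(g j : EuclideanSpace ℝ (Fin n))‖ + 1) < B := by
            rw [hB]; linarith
          have hnn : (0:ℝ) ≤ ∑ j, (‖(g j : EuclideanSpace ℝ (Fin n))‖ + 1) :=
            Finset.sum_nonneg fun j _ => by positivity
          calc (δ / B) * ∑ j, (‖(g j : EuclideanSpace ℝ (Fin n))‖ + 1)
              < (δ / B) * B := by
                apply mul_lt_mul_of_pos_left hlt (div_pos hδpos hBpos)
            _ = δ := div_mul_cancel₀ δ hBpos.ne'
  have hyW : ∀ i, y ∉ W i := by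
    intro i hmem
    have : y ∈ Metric.ball p δ₁ := by
      rw [Metric.mem_ball]
      exact lt_of_lt_of_le hyp (min_le_left _ _)
    have := hδ₁sub this
    exact (Set.mem_iInter.mp this i) hmem
  have hyC : y ∈ C := by
    apply hball y hyV
    calc dist y x ≤ dist y p + dist p x := dist_triangle _ _ _
      _ < δ + dist p x := by linarith
      _ ≤ (ε - dist p x) + dist p x := by
          have := min_le_right δ₁ (ε - dist p x); linarith
      _ = ε := by ring
  -- rational coordinates of y
  have hyrat : ∀ i, ∃ qq : ℚ, y i = (qq : ℝ) := by
    intro i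
    choose ρ hρ using fun j => hSrat (g j : EuclideanSpace ℝ (Fin n)) (g j).2 i
    refine ⟨∑ j, q j * ρ j, ?_⟩
    have happly : y i = ∑ j, (q j : ℝ) * ((g j : EuclideanSpace ℝ (Fin n)) i) := by
      rw [hy]
      simp [WithLp.ofLp_sum, Finset.sum_apply]
    rw [happly]
    push_cast
    exact Finset.sum_congr rfl fun j _ => by rw [hρ j]
  choose qc hqc using hyrat
  -- common denominator
  set N : ℕ := ∏ i, (qc i).den with hN
  have hNpos : 0 < N := Finset.prod_pos fun i _ => (qc i).pos
  refine ⟨(N : ℝ) • y, ?_, ?_, ?_⟩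
  · intro i
    obtain ⟨mm, hmm⟩ : (qc i).den ∣ N := Finset.dvd_prod_of_mem _ (Finset.mem_univ i)
    refine ⟨(qc i).num * mm, ?_⟩
    have h1 : ((N : ℝ) • y) i = (N : ℝ) * y i := rfl
    rw [h1, hqc i]
    have h2 : (qc i) * ((qc i).den : ℚ) = ((qc i).num : ℚ) := by
      exact_mod_cast Rat.mul_den_eq_num (qc i)
    have h3 : ((N : ℚ)) = ((qc i).den : ℚ) * (mm : ℚ) := by exact_mod_cast hmm
    have h4 : (N : ℚ) * qc i = ((qc i).num * mm : ℤ) := by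
      rw [h3]
      push_cast
      linear_combination (mm : ℚ) * h2
    exact_mod_cast congrArg (fun z : ℚ => (z : ℝ)) h4
  · exact hCsmul (N : ℝ) (Nat.cast_nonneg N) y hyC
  · intro i hmem
    apply hyW i
    have hNne : (N : ℝ) ≠ 0 := Nat.cast_ne_zero.mpr hNpos.ne'
    have := (W i).smul_mem ((N : ℝ))⁻¹ hmem
    rwa [smul_smul, inv_mul_cancel₀ hNne, one_smul] at this
end

section
/- Let L be a finite-index subgroup of ℤ² and let m ≥ 1. Let F = ℕ² ∖ ( ((mL ∩ ℕ²) ∖ {0}) + ℕ² ), i.e., the complement in ℕ² of the set of points that can be written as a nonzero element of mL ∩ ℕ² plus an element of ℕ². Then F contains a representative of every coset of mL in ℤ²: for every q ∈ ℤ² there exists p ∈ F with p − q ∈ mL. -/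
theorem fundamental_region_represents_cosets
    (L : AddSubgroup (ℤ × ℤ)) (hL : L.FiniteIndex)
    (m : ℕ) (hm : 1 ≤ m) (q : ℤ × ℤ) :
    ∃ p : ℤ × ℤ,
      (0 ≤ p.1 ∧ 0 ≤ p.2) ∧
      -- p is not a nonzero element of mL ∩ ℕ² plus an element of ℕ²
      (¬ ∃ a b : ℤ × ℤ,
        (∃ ℓ ∈ L, a = (m : ℤ) • ℓ) ∧ (0 ≤ a.1 ∧ 0 ≤ a.2) ∧ a ≠ 0 ∧
        (0 ≤ b.1 ∧ 0 ≤ b.2) ∧ p = a + b) ∧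
      -- p represents the coset of q modulo mL
      (∃ ℓ ∈ L, p - q = (m : ℤ) • ℓ) := by
  haveI := hL
  -- The predicate: s is the coordinate-sum of a nonnegative representative
  set P : ℕ → Prop := fun s => ∃ p : ℤ × ℤ, (0 ≤ p.1 ∧ 0 ≤ p.2) ∧
      (∃ ℓ ∈ L, p - q = (m : ℤ) • ℓ) ∧ p.1.toNat + p.2.toNat = s with hP
  have hindex : (0 : ℤ) < (L.index : ℤ) := by
    exact_mod_cast Nat.pos_of_ne_zero hL.index_ne_zero
  -- there is a nonnegative representative
  have hex : ∃ s, P s := by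
    set k : ℤ := q.1.natAbs + q.2.natAbs with hk
    have hk0 : 0 ≤ k := by positivity
    set c : ℤ := k * (L.index : ℤ) with hc
    have hcmem : ((c, c) : ℤ × ℤ) ∈ L := by
      have h1 : L.index • ((1 : ℤ), (1 : ℤ)) ∈ L := AddSubgroup.nsmul_index_mem L _
      have h2 : k • (L.index • ((1 : ℤ), (1 : ℤ))) ∈ L := L.zsmul_mem h1 k
      have : k • (L.index • ((1 : ℤ), (1 : ℤ))) = ((c, c) : ℤ × ℤ) := by
        simp only [Prod.smul_mk, smul_eq_mul, mul_one, Prod.mk.injEq, hc]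
        constructor <;> ring
      rwa [this] at h2
    refine ⟨_, (q.1 + (m : ℤ) * c, q.2 + (m : ℤ) * c), ⟨?_, ?_⟩, ⟨(c, c), hcmem, ?_⟩, rfl⟩
    · have hm' : (1 : ℤ) ≤ (m : ℤ) := by exact_mod_cast hm
      have hk1 : -k ≤ q.1 := by rw [hk]; omega
      have hmc : k ≤ (m : ℤ) * c := by
        rw [hc]
        calc k ≤ k * (L.index : ℤ) := le_mul_of_one_le_right hk0 hindex
          _ ≤ (m : ℤ) * (k * (L.index : ℤ)) :=
            le_mul_of_one_le_left (by positivity) hm'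
      show (0 : ℤ) ≤ q.1 + (m : ℤ) * c
      linarith
    · have hm' : (1 : ℤ) ≤ (m : ℤ) := by exact_mod_cast hm
      have hk2 : -k ≤ q.2 := by rw [hk]; omega
      have hmc : k ≤ (m : ℤ) * c := by
        rw [hc]
        calc k ≤ k * (L.index : ℤ) := le_mul_of_one_le_right hk0 hindex
          _ ≤ (m : ℤ) * (k * (L.index : ℤ)) :=
            le_mul_of_one_le_left (by positivity) hm'
      show (0 : ℤ) ≤ q.2 + (m : ℤ) * c
      linarith
    · simp only [Prod.ext_iff, Prod.smul_mk, smul_eq_mul, Prod.fst_sub, Prod.snd_sub]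
      constructor <;> ring
  classical
  obtain ⟨p, ⟨hp1, hp2⟩, ⟨ℓ, hℓ, hpℓ⟩, hps⟩ := Nat.find_spec hex
  refine ⟨p, ⟨hp1, hp2⟩, ?_, ⟨ℓ, hℓ, hpℓ⟩⟩
  rintro ⟨a, b, ⟨ℓa, hℓa, ha⟩, ⟨ha1, ha2⟩, hane, ⟨hb1, hb2⟩, hpab⟩
  -- b is a smaller nonnegative representative
  have hbL : ∃ ℓ' ∈ L, b - q = (m : ℤ) • ℓ' := by
    refine ⟨ℓ - ℓa, L.sub_mem hℓ hℓa, ?_⟩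
    have : b - q = (p - q) - a := by rw [hpab]; ring
    rw [this, hpℓ, ha, smul_sub]
  have hapos : 0 < a.1 ∨ 0 < a.2 := by
    rcases lt_or_eq_of_le ha1 with h | h
    · exact Or.inl h
    rcases lt_or_eq_of_le ha2 with h' | h'
    · exact Or.inr h'
    exact absurd (Prod.ext h.symm h'.symm) hane
  have hlt : b.1.toNat + b.2.toNat < Nat.find hex := by
    rw [← hps]
    have e1 : p.1 = a.1 + b.1 := by rw [hpab, Prod.fst_add]
    have e2 : p.2 = a.2 + b.2 := by rw [hpab, Prod.snd_add]
    omega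
  exact Nat.find_min hex hlt ⟨b, ⟨hb1, hb2⟩, hbL, rfl⟩
end

section
/- Let L be a finite-index subgroup of ℤ² and let C ⊆ ℝ≥0² be a convex cone with nonempty interior in ℝ². Then there exist points p, q ∈ ℕ² whose images in ℝ² lie in C, such that p − q ∈ L, the binomial coefficient C(p₁ + p₂, p₁) is odd, and the binomial coefficient C(q₁ + q₂, q₁) is even. In particular, the indicator function of S = {(i,j) ∈ ℕ² : C(i+j, i) is odd} restricted to C ∩ ℕ² does not factor through the quotient ℤ²/L. -/
open Nat

lemma lucas2 (n k : ℕ) : choose n k % 2 = (choose (n%2) (k%2) * choose (n/2) (k/2)) % 2 :=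
  Choose.choose_modEq_choose_mod_mul_choose_div_nat

/-- If `a < 2^s` then `C(a + b·2^s, a)` is odd. -/
lemma odd_choose_low (s : ℕ) : ∀ a b : ℕ, a < 2^s → Odd ((a + b * 2^s).choose a) := by
  induction s with
  | zero =>
      intro a b ha
      interval_cases a
      simp [Nat.choose_zero_right]
  | succ s ih =>
      intro a b ha
      rw [Nat.odd_iff, lucas2]
      have h1 : (a + b * 2^(s+1)) % 2 = a % 2 := by
        have : b * 2^(s+1) % 2 = 0 := by
          simp [Nat.mul_mod, Nat.pow_succ]
        omega
      have h2 : (a + b * 2^(s+1)) / 2 = a / 2 + b * 2^s := by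
        have : b * 2^(s+1) = (b * 2^s) * 2 := by ring
        rw [this, Nat.add_mul_div_right _ _ (by norm_num)]
      have h3 : a / 2 < 2^s := by
        have : 2^(s+1) = 2^s * 2 := by ring
        omega
      have ho := (Nat.odd_iff).mp (ih (a/2) b h3)
      rw [h1, h2, Nat.choose_self, one_mul, ho]

/-- If bit `g` is set in both `a` and `b` then `C(a+b, a)` is even. -/
lemma even_choose_bit (g : ℕ) : ∀ a b : ℕ, a / 2^g % 2 = 1 → b / 2^g % 2 = 1 →
    Even ((a + b).choose a) := by
  induction g with
  | zero =>
      intro a b ha hb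
      simp only [pow_zero, Nat.div_one] at ha hb
      rw [Nat.even_iff, lucas2]
      have : (a + b) % 2 = 0 := by omega
      rw [this, ha]
      simp
  | succ g ih =>
      intro a b ha hb
      rcases Nat.even_or_odd a with hae | hao
      · -- a even: (a+b)/2 = a/2 + b/2 if also handling b parity; cases on b
        have ha2 : a / 2 / 2^g % 2 = 1 := by
          rw [Nat.div_div_eq_div_mul]
          rw [Nat.pow_succ] at ha
          rwa [mul_comm] at ha
        have hb2 : b / 2 / 2^g % 2 = 1 := by
          rw [Nat.div_div_eq_div_mul]
          rw [Nat.pow_succ] at hb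
          rwa [mul_comm] at hb
        have hdiv : (a + b) / 2 = a / 2 + b / 2 := by
          obtain ⟨c, rfl⟩ := hae
          omega
        rw [Nat.even_iff, lucas2, hdiv]
        have h0 := Nat.even_iff.mp (ih (a/2) (b/2) ha2 hb2)
        simp [Nat.mul_mod, h0]
      · rcases Nat.even_or_odd b with hbe | hbo
        · have ha2 : a / 2 / 2^g % 2 = 1 := by
            rw [Nat.div_div_eq_div_mul]
            rw [Nat.pow_succ] at ha
            rwa [mul_comm] at ha
          have hb2 : b / 2 / 2^g % 2 = 1 := by
            rw [Nat.div_div_eq_div_mul]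
            rw [Nat.pow_succ] at hb
            rwa [mul_comm] at hb
          have hdiv : (a + b) / 2 = a / 2 + b / 2 := by
            obtain ⟨c, rfl⟩ := hbe
            omega
          rw [Nat.even_iff, lucas2, hdiv]
          have h0 := Nat.even_iff.mp (ih (a/2) (b/2) ha2 hb2)
          simp [Nat.mul_mod, h0]
        · -- both odd: carry at bit 0
          rw [Nat.even_iff, lucas2]
          have h1 : (a + b) % 2 = 0 := by
            rw [Nat.odd_iff] at hao hbo; omega
          have h2 : a % 2 = 1 := Nat.odd_iff.mp hao
          rw [h1, h2]
          simp

lemma core (n : ℕ) (hn : n ≠ 0) (α β ε : ℝ) (hα : 0 < α) (hβ : 0 < β) (hαβ : α ≤ β)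
    (hε : 0 < ε) :
    ∃ (a b : ℕ) (l : ℝ), 0 < l ∧ |((a:ℝ)) - l*α| < l*ε ∧ |((b:ℝ)) - l*β| < l*ε ∧
      |((b:ℝ) + (n:ℝ)) - l*β| < l*ε ∧ Odd ((a + b).choose a) ∧ Even ((a + (b+n)).choose a) := by
  set g := Nat.log2 n with hg
  have hg1 : 2^g ≤ n := Nat.log2_self_le hn
  have hg2 : n < 2^(g+1) := Nat.lt_log2_self
  obtain ⟨K, hK⟩ : ∃ K : ℕ, ((n:ℝ)+2)*β < 2^K * ε := by
    obtain ⟨N, hN⟩ := exists_nat_gt (((n:ℝ)+2)*β/ε)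
    refine ⟨N, ?_⟩
    have h1 : ((n:ℝ)+2)*β/ε < 2^N := lt_of_lt_of_le hN (by exact_mod_cast (Nat.lt_two_pow_self (n := N)).le)
    calc ((n:ℝ)+2)*β = ((n:ℝ)+2)*β/ε * ε := by field_simp
    _ < 2^N * ε := mul_lt_mul_of_pos_right h1 hε
  set l : ℝ := 2^(K+g+1)/β with hl
  have hlpos : 0 < l := by positivity
  have hlβ : l * β = 2^(K+g+1) := by rw [hl, div_mul_cancel₀]; exact ne_of_gt hβ
  set t : ℝ := 2^(K+1)*α/β with ht
  have htpos : 0 < t := by positivity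
  set c : ℕ := ⌈t/2⌉₊ with hc
  have hc1 : 1 ≤ c := Nat.ceil_pos.mpr (by positivity)
  have hcle : c ≤ 2^K := by
    rw [hc]
    apply Nat.ceil_le.mpr
    push_cast
    have h2 : (2:ℝ)^(K+1)*α ≤ 2^(K+1)*β := mul_le_mul_of_nonneg_left hαβ (by positivity)
    have h3 : t ≤ 2^(K+1) := by
      rw [ht, div_le_iff₀ hβ]; nlinarith
    have h4 : (2:ℝ)^(K+1) = 2*2^K := by ring
    linarith
  set i : ℕ := 2*c - 1 with hi
  have hiodd : i % 2 = 1 := by omega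
  have hiK : i < 2^(K+1) := by
    have h4 : 2^(K+1) = 2 * 2^K := by ring
    omega
  have hicast : (i:ℝ) = 2*(c:ℝ) - 1 := by
    rw [hi, Nat.cast_sub (by omega : 1 ≤ 2*c)]
    push_cast; ring
  have hit : |(i:ℝ) - t| ≤ 1 := by
    have hu : t/2 ≤ (c:ℝ) := Nat.le_ceil _
    have hv : (c:ℝ) < t/2 + 1 := Nat.ceil_lt_add_one (by positivity)
    rw [abs_le, hicast]
    constructor <;> linarith
  have hng : (2:ℝ)^g ≤ (n:ℝ) := by exact_mod_cast hg1
  have e2 : (2:ℝ)^K * ε ≤ 2^(K+g+1) * ε := by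
    apply mul_le_mul_of_nonneg_right _ hε.le
    apply pow_le_pow_right₀ (by norm_num) (by omega)
  have hc2 : ((2^(K+g+1):ℕ):ℝ) = l * β := by rw [hlβ]; push_cast; ring
  refine ⟨i * 2^g, 2^(K+g+1), l, hlpos, ?_, ?_, ?_, ?_, ?_⟩
  · -- |i*2^g - l*α| < l*ε
    have hlα : l * α = t * 2^g := by
      rw [hl, ht]; field_simp; ring
    have hcast : ((i * 2^g : ℕ):ℝ) = (i:ℝ) * 2^g := by push_cast; ring
    have hb1 : |((i * 2^g : ℕ):ℝ) - l*α| ≤ 2^g := by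
      rw [hcast, hlα, ← sub_mul, abs_mul, abs_of_nonneg (by positivity : (0:ℝ) ≤ (2:ℝ)^g)]
      nlinarith [pow_pos (show (0:ℝ) < 2 by norm_num) g]
    have hlε : (2:ℝ)^g < l * ε := by
      rw [hl, div_mul_eq_mul_div, lt_div_iff₀ hβ]
      have e1 : (2:ℝ)^g * β ≤ (n:ℝ) * β := mul_le_mul_of_nonneg_right hng hβ.le
      nlinarith
    linarith [hb1, hlε]
  · rw [hc2, sub_self, abs_zero]
    positivity
  · rw [hc2, show l * β + (n:ℝ) - l * β = (n:ℝ) by ring,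
      abs_of_nonneg (Nat.cast_nonneg n), hl, div_mul_eq_mul_div, lt_div_iff₀ hβ]
    nlinarith
  · -- odd
    have hb : i * 2^g < 2^(K+g+1) := by
      calc i * 2^g < 2^(K+1) * 2^g :=
        Nat.mul_lt_mul_of_lt_of_le hiK (le_refl _) (Nat.two_pow_pos g)
      _ = 2^(K+g+1) := by ring
    have ho := odd_choose_low (K+g+1) (i*2^g) 1 hb
    simpa using ho
  · -- even
    apply even_choose_bit g
    · rw [Nat.mul_div_cancel _ (Nat.two_pow_pos g)]
      exact hiodd
    · have hsplit : (2^(K+g+1)+n)/2^g = n/2^g + 2^(K+1) := by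
        rw [show 2^(K+g+1) = 2^(K+1) * 2^g by ring, Nat.add_comm]
        exact Nat.add_mul_div_right n (2^(K+1)) (Nat.two_pow_pos g)
      have hdiv1 : n / 2^g = 1 := by
        apply Nat.div_eq_of_lt_le (by simpa using hg1)
        calc n < 2^(g+1) := hg2
        _ = 2 * 2^g := by ring
        _ = (1+1) * 2^g := by norm_num
      rw [hsplit, hdiv1]
      have h4 : 2^(K+1) = 2 * 2^K := by ring
      omega

theorem sierpinski_not_periodic_on_cone
    (L : AddSubgroup (ℤ × ℤ)) (hL : L.FiniteIndex)
    (C : Set (ℝ × ℝ)) (hC0 : C ⊆ {x : ℝ × ℝ | 0 ≤ x.1 ∧ 0 ≤ x.2})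
    (hCadd : ∀ x ∈ C, ∀ y ∈ C, x + y ∈ C)
    (hCsmul : ∀ (c : ℝ), 0 ≤ c → ∀ x ∈ C, c • x ∈ C)
    (hCint : (interior C).Nonempty) :
    ∃ p q : ℕ × ℕ,
      ((p.1 : ℝ), (p.2 : ℝ)) ∈ C ∧ ((q.1 : ℝ), (q.2 : ℝ)) ∈ C ∧
      ((p.1 : ℤ) - (q.1 : ℤ), (p.2 : ℤ) - (q.2 : ℤ)) ∈ L ∧
      Odd ((p.1 + p.2).choose p.1) ∧ Even ((q.1 + q.2).choose q.1) := by
  obtain ⟨x0, hx0⟩ := hCint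
  obtain ⟨ε, hε, hball⟩ := Metric.isOpen_iff.mp isOpen_interior x0 hx0
  have hballC : Metric.ball x0 ε ⊆ C := hball.trans interior_subset
  set α := x0.1 with hα'
  set β := x0.2 with hβ'
  -- positivity of coordinates
  have hmemball : ∀ u v : ℝ, |u - α| < ε → |v - β| < ε → (u, v) ∈ C := by
    intro u v hu hv
    apply hballC
    rw [Metric.mem_ball, Prod.dist_eq, max_lt_iff]
    constructor
    · simpa [Real.dist_eq] using hu
    · simpa [Real.dist_eq] using hv
  have hαpos : 0 < α := by
    have h := hC0 (hmemball (α - ε/2) β (by rw [abs_of_nonpos] <;> [linarith; linarith])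
      (by simpa using hε))
    simp only [Set.mem_setOf_eq] at h
    linarith [h.1]
  have hβpos : 0 < β := by
    have h := hC0 (hmemball α (β - ε/2) (by simpa using hε)
      (by rw [abs_of_nonpos] <;> [linarith; linarith]))
    simp only [Set.mem_setOf_eq] at h
    linarith [h.2]
  have hmem : ∀ l x y : ℝ, 0 < l → |x - l*α| < l*ε → |y - l*β| < l*ε → (x, y) ∈ C := by
    intro l x y hl hx hy
    have key : ∀ (w c : ℝ), |w - l*c| < l*ε → |w/l - c| < ε := by
      intro w c h
      have e : w/l - c = (w - l*c)/l := by field_simp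
      rw [e, abs_div, abs_of_pos hl, div_lt_iff₀ hl]
      nlinarith [h]
    have hx' : |x/l - α| < ε := key x α hx
    have hy' : |y/l - β| < ε := key y β hy
    have hin : ((x/l, y/l) : ℝ × ℝ) ∈ C := hmemball _ _ hx' hy'
    have := hCsmul l hl.le _ hin
    have heq : l • ((x/l, y/l) : ℝ × ℝ) = (x, y) := by
      simp only [Prod.smul_mk, smul_eq_mul]
      rw [mul_div_cancel₀ _ (ne_of_gt hl), mul_div_cancel₀ _ (ne_of_gt hl)]
    rwa [heq] at this
  set n := L.index with hn'
  have hn : n ≠ 0 := hL.index_ne_zero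
  have hLn : ∀ z : ℤ × ℤ, n • z ∈ L := fun z => AddSubgroup.nsmul_index_mem L z
  rcases le_total α β with hab | hab
  · obtain ⟨a, b, l, hl, h1, h2, h3, hodd, heven⟩ := core n hn α β ε hαpos hβpos hab hε
    refine ⟨(a, b), (a, b + n), hmem l a b hl h1 h2, ?_, ?_, hodd, heven⟩
    · push_cast
      exact hmem l a ((b:ℝ) + (n:ℝ)) hl h1 h3
    · have : ((a:ℤ) - (a:ℤ), ((b:ℕ):ℤ) - (((b + n : ℕ)):ℤ)) = n • ((0, -1) : ℤ × ℤ) := by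
        simp [Prod.ext_iff, nsmul_eq_mul]
      rw [this]
      exact hLn _
  · obtain ⟨a, b, l, hl, h1, h2, h3, hodd, heven⟩ := core n hn β α ε hβpos hαpos hab hε
    refine ⟨(b, a), (b + n, a), hmem l b a hl h2 h1, ?_, ?_, ?_, ?_⟩
    · push_cast
      exact hmem l ((b:ℝ) + (n:ℝ)) a hl h3 h1
    · have : (((b:ℕ):ℤ) - (((b + n : ℕ)):ℤ), (a:ℤ) - (a:ℤ)) = n • ((-1, 0) : ℤ × ℤ) := by
        simp [Prod.ext_iff, nsmul_eq_mul]
      rw [this]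
      exact hLn _
    · show Odd ((b + a).choose b)
      rw [Nat.add_comm b a]
      rwa [Nat.choose_symm_add] at hodd
    · show Even ((b + n + a).choose (b + n))
      rw [Nat.add_comm (b + n) a]
      rwa [Nat.choose_symm_add] at heven
end

section
/- The set S = {(i,j) ∈ ℕ² : the binomial coefficient C(i+j, i) is odd} does not admit an affine stratification: there do not exist finitely many pairs (w₁, Λ₁), …, (w_k, Λ_k), with each wₜ ∈ ℤ² and each Λₜ a finitely generated additive submonoid of ℤ², such that S = ⋃ₜ (wₜ + Λₜ). -/
/-- `T ⊆ ℤ²` admits an affine stratification: it is a finite union of sets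
`w + Λ` with `Λ` a finitely generated additive submonoid of `ℤ²`. -/
def HasAffineStratification2 (T : Set (ℤ × ℤ)) : Prop :=
  ∃ (k : ℕ) (w : Fin k → ℤ × ℤ) (Λ : Fin k → AddSubmonoid (ℤ × ℤ)),
    (∀ t, (Λ t).FG) ∧ T = ⋃ t, (fun x => w t + x) '' (Λ t : Set (ℤ × ℤ))

/-- `n = 0` iff all its bits are `false`. -/
lemma SierpAux.eq_zero_iff_testBit (n : ℕ) : n = 0 ↔ ∀ i, n.testBit i = false := by
  constructor
  · rintro rfl i; exact Nat.zero_testBit i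
  · intro h
    by_contra hn
    obtain ⟨i, hi⟩ := Nat.exists_testBit_of_ne_zero hn
    rw [h i] at hi; exact Bool.false_ne_true hi

/-- `x &&& y = 0` iff the bits are disjoint. -/
lemma SierpAux.and_eq_zero_iff (x y : ℕ) :
    x &&& y = 0 ↔ ∀ i, x.testBit i = false ∨ y.testBit i = false := by
  rw [SierpAux.eq_zero_iff_testBit]
  refine forall_congr' fun i => ?_
  rw [Nat.testBit_and]
  rcases hx : x.testBit i <;> rcases hy : y.testBit i <;> simp

lemma SierpAux.and_div_two (x y : ℕ) (h : ¬(x % 2 = 1 ∧ y % 2 = 1)) :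
    (x &&& y = 0) ↔ (x / 2 &&& y / 2 = 0) := by
  rw [SierpAux.and_eq_zero_iff, SierpAux.and_eq_zero_iff]
  constructor
  · intro H i
    have := H (i + 1)
    rwa [Nat.testBit_succ, Nat.testBit_succ] at this
  · intro H i
    cases i with
    | zero =>
      rw [Nat.testBit_zero, Nat.testBit_zero]
      rcases Nat.mod_two_eq_zero_or_one x with hx | hx
      · left; simp [hx]
      · right
        have hy : y % 2 = 0 := by omega
        simp [hy]
    | succ i =>
      rw [Nat.testBit_succ, Nat.testBit_succ]
      exact H i

/-- Kummer's theorem mod 2: `choose (x+y) x` is odd iff `x` and `y` have disjoint bits. -/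
lemma SierpAux.kummer : ∀ n x y : ℕ, x + y = n → (Odd (n.choose x) ↔ x &&& y = 0) := by
  intro n
  induction n using Nat.strong_induction_on with
  | _ n ih =>
    intro x y hxy
    rcases Nat.eq_zero_or_pos n with hn | hn
    · subst hn
      have hx : x = 0 := by omega
      have hy : y = 0 := by omega
      subst hx; subst hy
      simp
    · have : Fact (Nat.Prime 2) := ⟨Nat.prime_two⟩
      have lucas := Choose.choose_modEq_choose_mod_mul_choose_div_nat (n := n) (k := x) (p := 2)
      have hmod : n.choose x % 2 = ((n % 2).choose (x % 2) * (n / 2).choose (x / 2)) % 2 := lucas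
      by_cases hodd : x % 2 = 1 ∧ y % 2 = 1
      · -- both odd: choose is even, and bits collide at position 0
        have hn2 : n % 2 = 0 := by omega
        have hx2 : x % 2 = 1 := hodd.1
        rw [hn2, hx2] at hmod
        simp only [Nat.choose] at hmod
        constructor
        · intro h
          rw [Nat.odd_iff] at h
          rw [h] at hmod
          simp at hmod
        · intro h
          exfalso
          rw [SierpAux.and_eq_zero_iff] at h
          rcases h 0 with h0 | h0 <;>
            · rw [Nat.testBit_zero] at h0
              simp [hodd.1, hodd.2] at h0
      · -- at most one odd: the low-digit binomial coefficient is 1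
        have h1 : (n % 2).choose (x % 2) = 1 := by
          rcases Nat.mod_two_eq_zero_or_one x with hx | hx <;>
            rcases Nat.mod_two_eq_zero_or_one y with hy | hy
          · have : n % 2 = 0 := by omega
            rw [this, hx]; rfl
          · have : n % 2 = 1 := by omega
            rw [this, hx]; rfl
          · have : n % 2 = 1 := by omega
            rw [this, hx]; rfl
          · exact absurd ⟨hx, hy⟩ hodd
        rw [h1, one_mul] at hmod
        have hdiv : x / 2 + y / 2 = n / 2 := by omega
        have hlt : n / 2 < n := Nat.div_lt_self hn one_lt_two
        have IH := ih (n / 2) hlt (x / 2) (y / 2) hdiv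
        rw [SierpAux.and_div_two x y hodd]
        rw [← IH, Nat.odd_iff, Nat.odd_iff, hmod]

/-- A number in `[2^K, 2^(K+1))` has bit `K` set. -/
lemma SierpAux.testBit_of_between {K x : ℕ} (h1 : 2 ^ K ≤ x) (h2 : x < 2 ^ (K + 1)) :
    x.testBit K = true := by
  have hdiv : x / 2 ^ K = 1 := by
    apply Nat.div_eq_of_lt_le
    · simpa using h1
    · have : 2 ^ (K + 1) = 2 * 2 ^ K := by ring
      omega
  rw [Nat.testBit_eq_decide_div_mod_eq, hdiv]
  rfl

theorem sierpinski_no_affine_stratification :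
    ¬ HasAffineStratification2
      {p : ℤ × ℤ | ∃ i j : ℕ, p = ((i : ℤ), (j : ℤ)) ∧ Odd ((i + j).choose i)} := by
  rintro ⟨k, w, Λ, -, hS⟩
  set S : Set (ℤ × ℤ) :=
    {p : ℤ × ℤ | ∃ i j : ℕ, p = ((i : ℤ), (j : ℤ)) ∧ Odd ((i + j).choose i)} with hSdef
  -- membership characterization
  have hmem : ∀ i j : ℕ, (((i : ℤ), (j : ℤ)) ∈ S ↔ i &&& j = 0) := by
    intro i j
    constructor
    · rintro ⟨i', j', hp, hodd⟩
      have hi : (i : ℤ) = (i' : ℤ) := congrArg Prod.fst hp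
      have hj : (j : ℤ) = (j' : ℤ) := congrArg Prod.snd hp
      have hi' : i = i' := by exact_mod_cast hi
      have hj' : j = j' := by exact_mod_cast hj
      subst hi'; subst hj'
      exact (SierpAux.kummer (i + j) i j rfl).mp hodd
    · intro h
      exact ⟨i, j, rfl, (SierpAux.kummer (i + j) i j rfl).mpr h⟩
  -- the test points P n = (2^(n+1), 2^(n+1) - 1)
  have hPand : ∀ n : ℕ, (2 ^ (n + 1)) &&& (2 ^ (n + 1) - 1) = 0 := by
    intro n
    rw [SierpAux.and_eq_zero_iff]
    intro i
    by_cases hi : i = n + 1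
    · right
      subst hi
      rw [Nat.testBit_eq_decide_div_mod_eq]
      have : (2 ^ (n + 1) - 1) / 2 ^ (n + 1) = 0 :=
        Nat.div_eq_of_lt (by have := Nat.one_le_two_pow (n := n + 1); omega)
      rw [this]; rfl
    · left
      rw [Nat.testBit_two_pow]
      simpa using fun h => hi h.symm
  have hcast : ∀ n : ℕ, (((2 ^ (n + 1) - 1 : ℕ) : ℤ)) = 2 ^ (n + 1) - 1 := by
    intro n
    have := Nat.one_le_two_pow (n := n + 1)
    push_cast [this]
    ring
  have hP : ∀ n : ℕ, ((2 ^ (n + 1) : ℤ), (2 ^ (n + 1) - 1 : ℤ)) ∈ S := by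
    intro n
    have := (hmem (2 ^ (n + 1)) (2 ^ (n + 1) - 1)).mpr (hPand n)
    have hc1 : ((2 ^ (n + 1) : ℕ) : ℤ) = 2 ^ (n + 1) := by push_cast; ring
    rwa [hc1, hcast n] at this
  -- each P n lies in some stratum
  have hf : ∀ n : ℕ, ∃ t : Fin k,
      ((2 ^ (n + 1) : ℤ), (2 ^ (n + 1) - 1 : ℤ)) ∈ (fun x => w t + x) '' (Λ t : Set (ℤ × ℤ)) := by
    intro n
    have := hP n
    rw [hS] at this
    exact Set.mem_iUnion.mp this
  choose f hfmem using hf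
  -- pigeonhole: some fiber of f is infinite
  obtain ⟨t, htinf⟩ := Finite.exists_infinite_fiber f
  have hinf : (f ⁻¹' {t}).Infinite := Set.infinite_coe_iff.mp htinf
  -- w t lies in S (take 0 ∈ Λ t)
  have hwS : w t ∈ S := by
    rw [hS]
    exact Set.mem_iUnion.mpr ⟨t, ⟨0, (Λ t).zero_mem, by simp⟩⟩
  obtain ⟨a, b, hwab, -⟩ := hwS
  -- choose large indices m < n in the fiber
  obtain ⟨m, hmf, hm⟩ := hinf.exists_gt (a + b + 2)
  obtain ⟨n, hnf, hmn⟩ := hinf.exists_gt m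
  have hfm : f m = t := hmf
  have hfn : f n = t := hnf
  -- extract monoid elements
  have hum' := hfmem m; rw [hfm] at hum'
  have hvn' := hfmem n; rw [hfn] at hvn'
  obtain ⟨u, hu, hum⟩ := hum'
  obtain ⟨v, hv, hvn⟩ := hvn'
  -- the combined point Q = w t + (u + v) ∈ S
  have hQ : w t + (u + v) ∈ S := by
    rw [hS]
    exact Set.mem_iUnion.mpr ⟨t, ⟨u + v, (Λ t).add_mem hu hv, rfl⟩⟩
  have hQeq : w t + (u + v) =
      ((2 ^ (m + 1) + 2 ^ (n + 1) - a : ℤ), (2 ^ (m + 1) + 2 ^ (n + 1) - 2 - b : ℤ)) := by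
    have h1 : w t + u = ((2 ^ (m + 1) : ℤ), (2 ^ (m + 1) - 1 : ℤ)) := hum
    have h2 : w t + v = ((2 ^ (n + 1) : ℤ), (2 ^ (n + 1) - 1 : ℤ)) := hvn
    have : w t + (u + v) = (w t + u) + (w t + v) - w t := by abel
    rw [this, h1, h2, hwab]
    refine Prod.ext ?_ ?_ <;> simp <;> ring
  rw [hQeq] at hQ
  obtain ⟨i, j, hij, hodd⟩ := hQ
  have hi : (i : ℤ) = 2 ^ (m + 1) + 2 ^ (n + 1) - a := (congrArg Prod.fst hij).symm
  have hj : (j : ℤ) = 2 ^ (m + 1) + 2 ^ (n + 1) - 2 - b := (congrArg Prod.snd hij).symm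
  -- bit (n+1) of both i and j is set
  have hab : a + b + 2 < 2 ^ (m + 1) := by
    calc a + b + 2 < m := hm
    _ < 2 ^ m := Nat.lt_two_pow_self (n := m)
    _ < 2 ^ (m + 1) := by have := Nat.one_le_two_pow (n := m); omega
  have hXm : (2 : ℕ) * 2 ^ (m + 1) ≤ 2 ^ (n + 1) := by
    have : (2 : ℕ) * 2 ^ (m + 1) = 2 ^ (m + 2) := by ring
    rw [this]
    exact Nat.pow_le_pow_right (by norm_num) (by omega)
  have hiN : 2 ^ (n + 1) ≤ i ∧ i < 2 ^ (n + 2) := by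
    have hcm : ((2 ^ (m + 1) : ℕ) : ℤ) = 2 ^ (m + 1) := by push_cast; ring
    have hcn : ((2 ^ (n + 1) : ℕ) : ℤ) = 2 ^ (n + 1) := by push_cast; ring
    have hcn2 : ((2 ^ (n + 2) : ℕ) : ℤ) = 2 ^ (n + 2) := by push_cast; ring
    have h2 : (2 ^ (n + 2) : ℕ) = 2 * 2 ^ (n + 1) := by ring
    rw [← hcm, ← hcn] at hi
    omega
  have hjN : 2 ^ (n + 1) ≤ j ∧ j < 2 ^ (n + 2) := by
    have hcm : ((2 ^ (m + 1) : ℕ) : ℤ) = 2 ^ (m + 1) := by push_cast; ring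
    have hcn : ((2 ^ (n + 1) : ℕ) : ℤ) = 2 ^ (n + 1) := by push_cast; ring
    have h2 : (2 ^ (n + 2) : ℕ) = 2 * 2 ^ (n + 1) := by ring
    rw [← hcm, ← hcn] at hj
    omega
  have hiBit : i.testBit (n + 1) = true := SierpAux.testBit_of_between hiN.1 hiN.2
  have hjBit : j.testBit (n + 1) = true := SierpAux.testBit_of_between hjN.1 hjN.2
  have hand : i &&& j = 0 := (SierpAux.kummer (i + j) i j rfl).mp hodd
  have : (i &&& j).testBit (n + 1) = true := by
    rw [Nat.testBit_and, hiBit, hjBit]; rfl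
  rw [hand, Nat.zero_testBit] at this
  exact Bool.false_ne_true this
end
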